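/- For every integer d ≥ 2 and every pair of orthonormal bases of ℂ^d with overlap matrix U, there exists an index i₀ ∈ {1,…,d} such that max_j |U_{i₀ j}|² ≤ 1 − (d−1)·Ind(U)². -/

import Mathlib

/-- Modulus of the overlap `⟨e i, f j⟩` of two orthonormal bases of `ℂ^d`. -/
noncomputable def racOverlap (d : ℕ)
    (e f : OrthonormalBasis (Fin d) ℂ (EuclideanSpace ℂ (Fin d))) (i j : Fin d) : ℝ :=
  ‖(inner ℂ (e i) (f j) : ℂ)‖

/-- Random-access-code independence `Ind(U) = (1/(d-1))·((1/d)·Σ_{i,j} |U_{ij}| − 1)`. -/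
noncomputable def racInd (d : ℕ)
    (e f : OrthonormalBasis (Fin d) ℂ (EuclideanSpace ℂ (Fin d))) : ℝ :=
  (1 / ((d : ℝ) - 1)) * ((1 / (d : ℝ)) * (∑ i, ∑ j, racOverlap d e f i j) - 1)

/-!
Put `a = (d - 1)·Ind(U)`, so that `a + 1` is the average row sum of `|U|`, and pick a row `i₀`
whose sum `s` is at least that average. The row has unit `ℓ²`-norm, so its entries lie in
`[0, 1]`; hence every row sum is at least `1`, which gives `a ≥ 0`, and `s - |U_{i₀ j}| ≥ s - 1 ≥ a`.
By Cauchy–Schwarz on the remaining `d - 1` entries,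
`a² ≤ (s - |U_{i₀ j}|)² ≤ (d - 1)(1 - |U_{i₀ j}|²)`, and dividing by `d - 1` gives the claim.
-/

open Finset

section UnitRows

variable {ι : Type*} [Fintype ι]

theorem sq_sum_sub_le_card_sub_one_mul (v : ι → ℝ) (j : ι) :
    (∑ k, v k - v j) ^ 2 ≤ (Fintype.card ι - 1) * (∑ k, v k ^ 2 - v j ^ 2) := by
  classical
  have hcard : ((univ.erase j).card : ℝ) = Fintype.card ι - 1 := by
    rw [card_erase_of_mem (mem_univ j), card_univ,
      Nat.cast_sub (Fintype.card_pos_iff.mpr ⟨j⟩), Nat.cast_one]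
  rw [← sum_erase_eq_sub (mem_univ j), ← sum_erase_eq_sub (mem_univ j), ← hcard]
  exact sq_sum_le_card_mul_sum_sq

theorem le_one_of_sum_sq_eq_one {v : ι → ℝ} (hv0 : ∀ k, 0 ≤ v k) (hv : ∑ k, v k ^ 2 = 1)
    (j : ι) : v j ≤ 1 :=
  (pow_le_one_iff_of_nonneg (hv0 j) two_ne_zero).mp
    (hv ▸ single_le_sum (fun k _ => sq_nonneg (v k)) (mem_univ j))

theorem one_le_sum_of_sum_sq_eq_one {v : ι → ℝ} (hv0 : ∀ k, 0 ≤ v k)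
    (hv : ∑ k, v k ^ 2 = 1) : 1 ≤ ∑ k, v k :=
  hv ▸ sum_le_sum fun k _ =>
    pow_le_of_le_one (hv0 k) (le_one_of_sum_sq_eq_one hv0 hv k) two_ne_zero

theorem exists_row_sq_average_sub_one_le {κ : Type*} [Fintype κ] [Nonempty ι]
    (M : ι → κ → ℝ) (hM0 : ∀ i j, 0 ≤ M i j) (hrow : ∀ i, ∑ j, M i j ^ 2 = 1) :
    ∃ i, ∀ j, ((∑ i, ∑ j, M i j) / Fintype.card ι - 1) ^ 2
      ≤ (Fintype.card κ - 1) * (1 - M i j ^ 2) := by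
  set S := ∑ i, ∑ j, M i j
  have hcard : (0 : ℝ) < Fintype.card ι := by exact_mod_cast Fintype.card_pos
  have hcard_le : (Fintype.card ι : ℝ) ≤ S := by
    simpa using sum_le_sum fun i (_ : i ∈ univ) => one_le_sum_of_sum_sq_eq_one (hM0 i) (hrow i)
  have ha : 0 ≤ S / Fintype.card ι - 1 := by
    rw [sub_nonneg, le_div_iff₀ hcard, one_mul]
    exact hcard_le
  obtain ⟨i, -, hi⟩ : ∃ i ∈ univ, S / Fintype.card ι ≤ ∑ j, M i j := by
    refine exists_le_of_sum_le univ_nonempty (le_of_eq ?_)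
    rw [sum_const, card_univ, nsmul_eq_mul]
    exact mul_div_cancel₀ _ hcard.ne'
  refine ⟨i, fun j => ?_⟩
  have hj := le_one_of_sum_sq_eq_one (hM0 i) (hrow i) j
  calc (S / Fintype.card ι - 1) ^ 2 ≤ (∑ k, M i k - M i j) ^ 2 :=
        pow_le_pow_left₀ ha (by linarith) 2
    _ ≤ (Fintype.card κ - 1) * (∑ k, M i k ^ 2 - M i j ^ 2) :=
        sq_sum_sub_le_card_sub_one_mul (M i) j
    _ = (Fintype.card κ - 1) * (1 - M i j ^ 2) := by rw [hrow i]

end UnitRows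

theorem sum_racOverlap_sq {d : ℕ} (e f : OrthonormalBasis (Fin d) ℂ (EuclideanSpace ℂ (Fin d)))
    (i : Fin d) : ∑ j, racOverlap d e f i j ^ 2 = 1 := by
  simp only [racOverlap, f.sum_sq_norm_inner_left, e.orthonormal.1 i, one_pow]

theorem sub_one_mul_racInd {d : ℕ} (hd : d ≠ 1)
    (e f : OrthonormalBasis (Fin d) ℂ (EuclideanSpace ℂ (Fin d))) :
    ((d : ℝ) - 1) * racInd d e f = (∑ i, ∑ j, racOverlap d e f i j) / d - 1 := by
  have hd' : (d : ℝ) - 1 ≠ 0 := sub_ne_zero.mpr (mod_cast hd)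
  rw [racInd, ← mul_assoc, mul_one_div_cancel hd', one_mul, one_div_mul_eq_div]

/-- For every `d ≥ 2` and every pair of orthonormal bases of `ℂ^d` with overlap
matrix `U`, there is an index `i₀` such that `max_j |U_{i₀ j}|² ≤ 1 − (d−1)·Ind(U)²`. -/
theorem exists_row_with_small_max_overlap (d : ℕ) (hd : 2 ≤ d)
    (e f : OrthonormalBasis (Fin d) ℂ (EuclideanSpace ℂ (Fin d))) :
    ∃ i₀ : Fin d, ∀ j : Fin d,
      (racOverlap d e f i₀ j) ^ 2 ≤ 1 - ((d : ℝ) - 1) * (racInd d e f) ^ 2 := by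
  have : Nonempty (Fin d) := ⟨⟨0, by omega⟩⟩
  obtain ⟨i₀, hi₀⟩ := exists_row_sq_average_sub_one_le (racOverlap d e f)
    (fun _ _ => norm_nonneg _) (sum_racOverlap_sq e f)
  refine ⟨i₀, fun j => ?_⟩
  have hd1 : (0 : ℝ) < d - 1 := by
    have : (2 : ℝ) ≤ d := mod_cast hd
    linarith
  have key := hi₀ j
  rw [Fintype.card_fin, ← sub_one_mul_racInd (by omega), mul_pow, sq,
    mul_assoc] at key
  linarith [le_of_mul_le_mul_left key hd1]
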